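/- Let H be a vertex-minimal finite simple graph with θ(H) ≤ 8 and χ'_s(H) > 20. Then H contains no triangle having at least one vertex of degree 3. -/

import Mathlib

/-!
Let `a` be a vertex of degree 3 on a triangle `abc`, and colour `H − a` strongly with 20 colours.
An edge `au` sees at most 17 edges avoiding `a`: those at the neighbours of `a` (the triangle
edge `bc` being counted twice) and those at the neighbours of `u` outside `N(a) ∪ {a}`, whose
degrees the Ore bound caps by `8 − deg u`. So each of the three edges at `a` keeps three free
colours, and they can be coloured distinctly, giving a strong 20-colouring of `H`.
-/

open SimpleGraph

variable {V : Type*}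

/-- Two edges are at distance at most 2 (they "see" each other): distinct and
some endpoint of one equals or is adjacent to some endpoint of the other. -/
def EdgeSees (G : SimpleGraph V) (e e' : Sym2 V) : Prop :=
  e ≠ e' ∧ ∃ a ∈ e, ∃ b ∈ e', a = b ∨ G.Adj a b

/-- `G` admits a strong `N`-edge-coloring. -/
def HasStrongColoring (G : SimpleGraph V) (N : ℕ) : Prop :=
  ∃ f : G.edgeSet → Fin N, ∀ e e' : G.edgeSet, EdgeSees G e.val e'.val → f e ≠ f e'

/-- `G − v`: delete the vertex `v` (remove all edges incident to it). -/
def DelV (G : SimpleGraph V) (v : V) : SimpleGraph V where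
  Adj a b := G.Adj a b ∧ a ≠ v ∧ b ≠ v
  symm := ⟨fun _ _ h => ⟨h.1.symm, h.2.2, h.2.1⟩⟩
  loopless := ⟨fun a h => G.loopless.irrefl a h.1⟩

open Finset

theorem Finset.card_biUnion_lt_sum_card {ι α : Type*} [DecidableEq α] {s : Finset ι}
    {t : ι → Finset α} {i j : ι} (hi : i ∈ s) (hj : j ∈ s) (hij : i ≠ j) {x : α}
    (hxi : x ∈ t i) (hxj : x ∈ t j) : #(s.biUnion t) < ∑ k ∈ s, #(t k) := by
  classical
  rw [← insert_erase hi, biUnion_insert, sum_insert (notMem_erase i s)]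
  have hx : x ∈ t i ∩ (s.erase i).biUnion t :=
    mem_inter.2 ⟨hxi, mem_biUnion.2 ⟨j, mem_erase.2 ⟨hij.symm, hj⟩, hxj⟩⟩
  have := card_union_add_card_inter (t i) ((s.erase i).biUnion t)
  have := card_pos.2 ⟨x, hx⟩
  have := card_biUnion_le (s := s.erase i) (t := t)
  omega

theorem Finset.exists_eq_insert_insert_singleton_of_card_eq_three {α : Type*} [DecidableEq α]
    {s : Finset α} (hs : #s = 3) {b c : α} (hb : b ∈ s) (hc : c ∈ s) (hbc : b ≠ c) :
    ∃ d, b ≠ d ∧ c ≠ d ∧ s = {b, c, d} := by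
  have hcb : c ∈ s.erase b := mem_erase.2 ⟨hbc.symm, hc⟩
  obtain ⟨d, hd⟩ := card_eq_one.1 <| show #((s.erase b).erase c) = 1 by
    rw [card_erase_of_mem hcb, card_erase_of_mem hb, hs]
  have hdmem : d ∈ (s.erase b).erase c := hd ▸ mem_singleton_self d
  refine ⟨d, fun h => ?_, fun h => ?_, ?_⟩
  · simp [← h] at hdmem
  · simp [← h] at hdmem
  · rw [← insert_erase hb, ← insert_erase hcb, hd]

theorem EdgeSees.symm {G : SimpleGraph V} {e e' : Sym2 V} (h : EdgeSees G e e') :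
    EdgeSees G e' e := by
  obtain ⟨hne, x, hx, y, hy, hxy⟩ := h
  exact ⟨hne.symm, y, hy, x, hx, hxy.imp Eq.symm fun h => h.symm⟩

theorem mem_edgeSet_delV {G : SimpleGraph V} {a : V} {e : Sym2 V} :
    e ∈ (DelV G a).edgeSet ↔ e ∈ G.edgeSet ∧ a ∉ e := by
  induction e using Sym2.ind with
  | _ x y => simp [DelV, not_or, eq_comm]

theorem EdgeSees.delV {G : SimpleGraph V} {a : V} {e e' : Sym2 V} (h : EdgeSees G e e')
    (he : a ∉ e) (he' : a ∉ e') : EdgeSees (DelV G a) e e' := by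
  obtain ⟨hne, x, hx, y, hy, hxy⟩ := h
  refine ⟨hne, x, hx, y, hy, hxy.imp_right fun hadj => ⟨hadj, ?_, ?_⟩⟩
  · rintro rfl; exact he hx
  · rintro rfl; exact he' hy

section Conflicts

variable [Fintype V] [DecidableEq V] (H : SimpleGraph V) [DecidableRel H.Adj]

open Classical in
noncomputable def conflictsAwayFrom (a : V) (e : Sym2 V) : Finset (Sym2 V) :=
  H.edgeFinset.filter fun e' => a ∉ e' ∧ EdgeSees H e e'

variable {H}

theorem mem_conflictsAwayFrom {a : V} {e e' : Sym2 V} :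
    e' ∈ conflictsAwayFrom H a e ↔ e' ∈ H.edgeSet ∧ a ∉ e' ∧ EdgeSees H e e' := by
  simp [conflictsAwayFrom]

theorem HasStrongColoring.of_delV {N : ℕ} {a : V} (hcol : HasStrongColoring (DelV H a) N)
    (hconf : ∀ e ∈ H.incidenceSet a, #(conflictsAwayFrom H a e) + H.degree a ≤ N) :
    HasStrongColoring H N := by
  obtain ⟨f, hf⟩ := hcol
  have hdel {e e' : Sym2 V} (he' : e' ∈ conflictsAwayFrom H a e) : e' ∈ (DelV H a).edgeSet :=
    mem_edgeSet_delV.2 ⟨(mem_conflictsAwayFrom.1 he').1, (mem_conflictsAwayFrom.1 he').2.1⟩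
  let forbidden (e : H.incidenceSet a) : Finset (Fin N) :=
    (conflictsAwayFrom H a e).attach.image fun e' => f ⟨e'.1, hdel e'.2⟩
  -- every edge at `a` has at least `deg a` free colours, so Hall's condition holds trivially
  obtain ⟨c, hc_inj, hc_mem⟩ :=
    (all_card_le_biUnion_card_iff_exists_injective fun e => univ \ forbidden e).1 <| by
      intro s
      rcases s.eq_empty_or_nonempty with rfl | ⟨e, he⟩
      · simp
      have hforb : #(forbidden e) ≤ #(conflictsAwayFrom H a e) :=
        card_image_le.trans card_attach.le
      calc #s ≤ H.degree a := card_incidenceSet_eq_degree H a ▸ card_le_univ s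
        _ ≤ #(univ \ forbidden e) := by
          rw [card_univ_sdiff, Fintype.card_fin]; have := hconf e e.2; omega
        _ ≤ _ := card_le_card (subset_biUnion_of_mem (fun e => univ \ forbidden e) he)
  have hseen {e e' : H.edgeSet} (ha : a ∈ e.1) (ha' : a ∉ e'.1) (hee' : EdgeSees H e e') :
      c ⟨e, e.2, ha⟩ ≠ f ⟨e', mem_edgeSet_delV.2 ⟨e'.2, ha'⟩⟩ := by
    have he' : e'.1 ∈ conflictsAwayFrom H a e := mem_conflictsAwayFrom.2 ⟨e'.2, ha', hee'⟩
    intro h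
    exact (mem_sdiff.1 (hc_mem ⟨e, e.2, ha⟩)).2
      (mem_image.2 ⟨⟨e', he'⟩, mem_attach _ _, h.symm⟩)
  refine ⟨fun e => if ha : a ∈ e.1 then c ⟨e, e.2, ha⟩
    else f ⟨e, mem_edgeSet_delV.2 ⟨e.2, ha⟩⟩, fun e e' hee' => ?_⟩
  by_cases ha : a ∈ e.1 <;> by_cases ha' : a ∈ e'.1 <;>
    simp only [ha, ha', dite_true, dite_false]
  · exact hc_inj.ne fun h => hee'.1 (congrArg Subtype.val h :)
  · exact hseen ha ha' hee'
  · exact (hseen ha' ha hee'.symm).symm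
  · exact hf _ _ (hee'.delV ha ha')

theorem conflictsAwayFrom_subset {a u : V} (hau : H.Adj a u) :
    conflictsAwayFrom H a s(a, u) ⊆
      (H.neighborFinset a).biUnion (fun x => (H.incidenceFinset x).erase s(a, x)) ∪
        (H.neighborFinset u \ insert a (H.neighborFinset a)).biUnion
          (fun x => (H.incidenceFinset x).erase s(u, x)) := by
  intro e he
  obtain ⟨heH, hae, -, y, hy, z, hz, hyz⟩ := mem_conflictsAwayFrom.1 he
  by_cases hN : ∃ x ∈ H.neighborFinset a, x ∈ e
  · obtain ⟨x, hx, hxe⟩ := hN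
    refine mem_union_left _ (mem_biUnion.2 ⟨x, hx, mem_erase.2 ⟨?_, ?_⟩⟩)
    · rintro rfl; exact hae (Sym2.mem_mk_left _ _)
    · exact (H.mem_incidenceFinset _ _).2 ⟨heH, hxe⟩
  push Not at hN
  have hue : u ∉ e := hN u ((H.mem_neighborFinset _ _).2 hau)
  have huz : H.Adj u z := by
    rcases Sym2.mem_iff.1 hy with rfl | rfl <;> rcases hyz with rfl | hadj
    · exact absurd hz hae
    · exact absurd hz (hN z ((H.mem_neighborFinset _ _).2 hadj))
    · exact absurd hz hue
    · exact hadj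
  refine mem_union_right _ (mem_biUnion.2
    ⟨z, mem_sdiff.2 ⟨(H.mem_neighborFinset _ _).2 huz, ?_⟩,
      mem_erase.2 ⟨?_, (H.mem_incidenceFinset _ _).2 ⟨heH, hz⟩⟩⟩)
  · rw [mem_insert, not_or]
    exact ⟨fun h => hae (h ▸ hz), fun h => hN z h hz⟩
  · rintro rfl; exact hue (Sym2.mem_mk_left _ _)

theorem card_incidenceFinset_erase {x y : V} (h : H.Adj y x) :
    #((H.incidenceFinset x).erase s(y, x)) = H.degree x - 1 := by
  rw [card_erase_of_mem ((H.mem_incidenceFinset _ _).2 ⟨h, Sym2.mem_mk_right y x⟩),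
    card_incidenceFinset_eq_degree]

theorem card_biUnion_incidenceFinset_erase_le {k : ℕ}
    (hore : ∀ v w, H.Adj v w → H.degree v + H.degree w ≤ k) {u : V} {T : Finset V}
    (hT : T ⊆ H.neighborFinset u) :
    #(T.biUnion fun x => (H.incidenceFinset x).erase s(u, x)) ≤ #T * (k - 1 - H.degree u) := by
  refine card_biUnion_le.trans (sum_le_card_nsmul _ _ _ fun x hx => ?_)
  have hux : H.Adj u x := (H.mem_neighborFinset _ _).1 (hT hx)
  have := hore u x hux
  rw [card_incidenceFinset_erase hux]
  omega

theorem card_conflictsAwayFrom_le {k : ℕ}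
    (hore : ∀ v w, H.Adj v w → H.degree v + H.degree w ≤ k) {a u : V} (hau : H.Adj a u) :
    #(conflictsAwayFrom H a s(a, u)) ≤
      #((H.neighborFinset a).biUnion fun x => (H.incidenceFinset x).erase s(a, x)) +
        #(H.neighborFinset u \ insert a (H.neighborFinset a)) * (k - 1 - H.degree u) :=
  (card_le_card (conflictsAwayFrom_subset hau)).trans <| (card_union_le _ _).trans <|
    Nat.add_le_add_left (card_biUnion_incidenceFinset_erase_le hore sdiff_subset) _

theorem card_biUnion_incidenceFinset_erase_lt {a v w : V} (hav : H.Adj a v) (haw : H.Adj a w)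
    (hvw : H.Adj v w) :
    #((H.neighborFinset a).biUnion fun x => (H.incidenceFinset x).erase s(a, x)) <
      ∑ x ∈ H.neighborFinset a, (H.degree x - 1) := by
  refine (card_biUnion_lt_sum_card ((H.mem_neighborFinset _ _).2 hav)
    ((H.mem_neighborFinset _ _).2 haw) hvw.ne (x := s(v, w)) ?_ ?_).trans_eq
    (sum_congr rfl fun x hx => card_incidenceFinset_erase ((H.mem_neighborFinset _ _).1 hx))
  · exact mem_erase.2
      ⟨by simp [haw.ne', hvw.ne'], (H.mem_incidenceFinset _ _).2 ⟨hvw, by simp⟩⟩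
  · exact mem_erase.2
      ⟨by simp [hav.ne', hvw.ne], (H.mem_incidenceFinset _ _).2 ⟨hvw, by simp⟩⟩

theorem card_neighborFinset_sdiff_le {a u : V} (hau : H.Adj a u) :
    #(H.neighborFinset u \ insert a (H.neighborFinset a)) ≤ H.degree u - 1 := by
  rw [← card_neighborFinset_eq_degree,
    ← card_erase_of_mem ((H.mem_neighborFinset _ _).2 hau.symm)]
  exact card_le_card fun x hx => by simp_all

theorem card_neighborFinset_sdiff_le_of_adj {a u v : V} (hau : H.Adj a u) (hav : H.Adj a v)
    (huv : H.Adj u v) :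
    #(H.neighborFinset u \ insert a (H.neighborFinset a)) ≤ H.degree u - 2 := by
  have hua : a ∈ H.neighborFinset u := (H.mem_neighborFinset _ _).2 hau.symm
  have hvu : v ∈ (H.neighborFinset u).erase a :=
    mem_erase.2 ⟨hav.ne', (H.mem_neighborFinset _ _).2 huv⟩
  calc _ ≤ #(((H.neighborFinset u).erase a).erase v) := card_le_card fun x hx => by
        simp only [mem_sdiff, mem_insert, not_or] at hx
        exact mem_erase.2 ⟨fun h => hx.2.2 (h ▸ (H.mem_neighborFinset _ _).2 hav),
          mem_erase.2 ⟨hx.2.1, hx.1⟩⟩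
    _ = H.degree u - 2 := by
      rw [card_erase_of_mem hvu, card_erase_of_mem hua, card_neighborFinset_eq_degree]; rfl

theorem card_conflictsAwayFrom_le_of_triangle
    (hore : ∀ v w, H.Adj v w → H.degree v + H.degree w ≤ 8) {a b c d : V}
    (hNa : H.neighborFinset a = {b, c, d}) (hbc : H.Adj b c) (hbd : b ≠ d) (hcd : c ≠ d)
    {e : Sym2 V} (he : e ∈ H.incidenceSet a) : #(conflictsAwayFrom H a e) ≤ 17 := by
  have hadj {x : V} : H.Adj a x ↔ x = b ∨ x = c ∨ x = d := by
    rw [← H.mem_neighborFinset, hNa]; simp only [mem_insert, mem_singleton]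
  have hab : H.Adj a b := hadj.2 (Or.inl rfl)
  have hac : H.Adj a c := hadj.2 (Or.inr (Or.inl rfl))
  have hdeg : H.degree a = 3 := by
    rw [← card_neighborFinset_eq_degree, hNa, card_eq_three]
    exact ⟨b, c, d, hbc.ne, hbd, hcd, rfl⟩
  have hA := (card_biUnion_incidenceFinset_erase_lt hab hac hbc).trans_eq <| by
    rw [hNa, sum_insert (by simp [hbc.ne, hbd]), sum_insert (by simp [hcd]), sum_singleton]
  have hab8 := hore a b hab
  have hac8 := hore a c hac
  have had8 := hore a d (hadj.2 (Or.inr (Or.inr rfl)))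
  have hbc8 := hore b c hbc
  obtain ⟨u, rfl⟩ := Sym2.mem_iff_exists.1 he.2
  have hau : H.Adj a u := he.1
  have hconf := card_conflictsAwayFrom_le hore hau
  have hu5 : H.degree u ≤ 5 := by have := hore a u hau; omega
  -- a neighbour of `a` on the triangle shares one more neighbour with `a`
  rcases hadj.1 hau with rfl | rfl | rfl
  · have := Nat.mul_le_mul_right (8 - 1 - H.degree u)
      (card_neighborFinset_sdiff_le_of_adj hau hac hbc)
    interval_cases H.degree u <;> omega
  · have := Nat.mul_le_mul_right (8 - 1 - H.degree u)
      (card_neighborFinset_sdiff_le_of_adj hau hab hbc.symm)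
    interval_cases H.degree u <;> omega
  · have := Nat.mul_le_mul_right (8 - 1 - H.degree u) (card_neighborFinset_sdiff_le hau)
    interval_cases H.degree u <;> omega

end Conflicts

/-- θ ≤ 8, χ'ₛ > 20: no triangle contains a 3-vertex. -/
theorem stmt10 [Fintype V] (H : SimpleGraph V) [DecidableRel H.Adj]
    (hore : ∀ u w, H.Adj u w → H.degree u + H.degree w ≤ 8)
    (hnc : ¬ HasStrongColoring H 20)
    (hmin : ∀ v, HasStrongColoring (DelV H v) 20) :
    ¬ ∃ a b c : V, H.Adj a b ∧ H.Adj b c ∧ H.Adj a c ∧ H.degree a = 3 := by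
  rintro ⟨a, b, c, hab, hbc, hac, hdeg⟩
  classical
  obtain ⟨d, hbd, hcd, hNa⟩ := exists_eq_insert_insert_singleton_of_card_eq_three
    ((card_neighborFinset_eq_degree H a).trans hdeg) ((H.mem_neighborFinset _ _).2 hab)
    ((H.mem_neighborFinset _ _).2 hac) hbc.ne
  refine hnc ((hmin a).of_delV fun e he => ?_)
  have := card_conflictsAwayFrom_le_of_triangle hore hNa hbc hbd hcd he
  omega
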